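/- arXiv:1302.0480 — 2 statements merged into one kernel-verified Lean document; each statement's English description precedes it below -/
import Mathlib

section
/- In the discrete Snell envelope setting, for 0 ≤ n ≤ K-1 define y_n = E[ ȳ_{n+1} | G_n ] (the value when stopping before time n+1 is forbidden). Then y_n = ess sup over stopping times N with n+1 ≤ N ≤ K of E[ S̄_N 1_{N<K} + ξ̄ 1_{N=K} | G_n ], and the stopping time N*_{n+1} = min{ N ≥ n+1 : ȳ_N ≤ S̄_N } ∧ K is optimal. -/
open MeasureTheory

/-!
Optional stopping on `[n + 1, K]`. Since `ȳ_m ≥ E[ȳ_{m+1} | G_m]` and `ȳ_m ≥ S̄_m`, for every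
stopping time `n + 1 ≤ N ≤ K` the stopped process `ȳ_{N ∧ m}` is a supermartingale on
`[n + 1, K]`, so `E[ȳ_N | G_{n+1}] ≤ ȳ_{n+1}` and the reward at `N` is at most `ȳ_N`; conditioning
on `G_n` gives the bound. Strictly before `N*` the envelope lies above the reward, so it equals its
continuation value and `ȳ_{N* ∧ m}` is a martingale on `[n + 1, K]`; at `N*` the envelope equals
the reward, which turns both inequalities into equalities.
-/

namespace MeasureTheory

variable {Ω β : Type*} {m0 : MeasurableSpace Ω}

lemma hittingBtwn_eq_sInf_union (u : ℕ → Ω → β) (s : Set β) {a b : ℕ} (hab : a ≤ b) (ω : Ω) :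
    hittingBtwn u s a b ω = sInf ({m | a ≤ m ∧ u m ω ∈ s} ∪ {b}) := by
  have hb : sInf ({m | a ≤ m ∧ u m ω ∈ s} ∪ {b}) ≤ b := Nat.sInf_le (Or.inr rfl)
  apply le_antisymm
  · rcases Nat.sInf_mem (⟨b, Or.inr rfl⟩ : ({m | a ≤ m ∧ u m ω ∈ s} ∪ {b}).Nonempty) with
      ⟨ha, hs⟩ | hb'
    · exact hittingBtwn_le_of_mem ha hb hs
    · rw [hb']
      exact hittingBtwn_le ω
  · rcases (hittingBtwn_le (u := u) (s := s) (n := a) ω).lt_or_eq with hlt | heq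
    · exact Nat.sInf_le
        (Or.inl ⟨le_hittingBtwn hab ω, hittingBtwn_mem_set_of_hittingBtwn_lt hlt⟩)
    · rwa [heq]

lemma stoppedProcess_natCast_apply (u : ℕ → Ω → β) (τ : Ω → ℕ) (m : ℕ) (ω : Ω) :
    stoppedProcess u (fun ω => (τ ω : WithTop ℕ)) m ω = u (min m (τ ω)) ω := by
  rcases le_total m (τ ω) with h | h
  · rw [stoppedProcess_eq_of_le (by simpa using h), min_eq_left h]
  · rw [stoppedProcess_eq_of_ge (by simpa using h), min_eq_right h]
    rfl

lemma stoppedProcess_natCast_succ [AddCommGroup β] (u : ℕ → Ω → β) (τ : Ω → ℕ) (m : ℕ) :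
    stoppedProcess u (fun ω => (τ ω : WithTop ℕ)) (m + 1) =
      stoppedProcess u (fun ω => (τ ω : WithTop ℕ)) m
        + {ω | m < τ ω}.indicator (u (m + 1) - u m) := by
  ext ω
  simp only [Pi.add_apply, stoppedProcess_natCast_apply]
  by_cases h : m < τ ω
  · rw [min_eq_left h, min_eq_left h.le, Set.indicator_of_mem (show ω ∈ {ω | m < τ ω} from h),
      Pi.sub_apply, add_sub_cancel]
  · rw [min_eq_right (not_lt.1 h), min_eq_right (by omega),
      Set.indicator_of_notMem (show ω ∉ {ω | m < τ ω} from h), add_zero]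

variable {μ : Measure Ω} [IsFiniteMeasure μ] {𝒢 : Filtration ℕ m0}

lemma condExp_le_of_condExp_succ_le {Z : ℕ → Ω → ℝ} {a b : ℕ} (hab : a ≤ b)
    (hZa : StronglyMeasurable[𝒢 a] (Z a)) (hZint : ∀ m, Integrable (Z m) μ)
    (hstep : ∀ m, a ≤ m → m < b → μ[Z (m + 1)|𝒢 m] ≤ᵐ[μ] Z m) :
    μ[Z b|𝒢 a] ≤ᵐ[μ] Z a := by
  induction b, hab using Nat.le_induction with
  | base => rw [condExp_of_stronglyMeasurable (𝒢.le a) hZa (hZint a)]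
  | succ b hab ih =>
    calc μ[Z (b + 1)|𝒢 a] =ᵐ[μ] μ[μ[Z (b + 1)|𝒢 b]|𝒢 a] :=
          (condExp_condExp_of_le (𝒢.mono hab) (𝒢.le b)).symm
      _ ≤ᵐ[μ] μ[Z b|𝒢 a] :=
          condExp_mono integrable_condExp (hZint b) (hstep b hab b.lt_succ_self)
      _ ≤ᵐ[μ] Z a := ih fun m ham hmb => hstep m ham (hmb.trans b.lt_succ_self)

lemma condExp_stoppedProcess_natCast_succ {u : ℕ → Ω → ℝ} {τ : Ω → ℕ}
    (hu : StronglyAdapted 𝒢 u) (hint : ∀ m, Integrable (u m) μ)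
    (hτ : IsStoppingTime 𝒢 (fun ω => (τ ω : WithTop ℕ))) (m : ℕ) :
    μ[stoppedProcess u (fun ω => (τ ω : WithTop ℕ)) (m + 1)|𝒢 m] =ᵐ[μ]
      stoppedProcess u (fun ω => (τ ω : WithTop ℕ)) m
        + {ω | m < τ ω}.indicator (μ[u (m + 1)|𝒢 m] - u m) := by
  have hs : MeasurableSet[𝒢 m] {ω | m < τ ω} := by
    simpa only [Set.compl_ofPred, not_le, Nat.cast_withTop, WithTop.coe_lt_coe] using
      (hτ m).compl
  rw [stoppedProcess_natCast_succ]
  refine (condExp_add (integrable_stoppedProcess hτ hint m)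
    (((hint _).sub (hint m)).indicator (𝒢.le m _ hs)) _).trans (Filter.EventuallyEq.add ?_ ?_)
  · rw [condExp_of_stronglyMeasurable (𝒢.le m) (hu.stoppedProcess_of_discrete hτ m)
      (integrable_stoppedProcess hτ hint m)]
  · refine (condExp_indicator ((hint _).sub (hint m)) hs).trans (Filter.EventuallyEq.indicator ?_)
    refine (condExp_sub (hint _) (hint m) _).trans ?_
    rw [condExp_of_stronglyMeasurable (𝒢.le m) (hu m) (hint m)]

lemma condExp_stoppedValue_le_of_condExp_succ_le {u : ℕ → Ω → ℝ} {τ : Ω → ℕ} {a b : ℕ}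
    (hab : a ≤ b) (hu : StronglyAdapted 𝒢 u) (hint : ∀ m, Integrable (u m) μ)
    (hτ : IsStoppingTime 𝒢 (fun ω => (τ ω : WithTop ℕ))) (hτab : ∀ ω, a ≤ τ ω ∧ τ ω ≤ b)
    (hstep : ∀ m, a ≤ m → m < b → ∀ᵐ ω ∂μ, m < τ ω → μ[u (m + 1)|𝒢 m] ω ≤ u m ω) :
    μ[stoppedValue u (fun ω => (τ ω : WithTop ℕ))|𝒢 a] ≤ᵐ[μ] u a := by
  have hZa : stoppedProcess u (fun ω => (τ ω : WithTop ℕ)) a = u a := funext fun ω => by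
    rw [stoppedProcess_natCast_apply, min_eq_left (hτab ω).1]
  have hZb : stoppedProcess u (fun ω => (τ ω : WithTop ℕ)) b =
      stoppedValue u (fun ω => (τ ω : WithTop ℕ)) := funext fun ω => by
    rw [stoppedProcess_natCast_apply, min_eq_right (hτab ω).2]
    rfl
  rw [← hZa, ← hZb]
  refine condExp_le_of_condExp_succ_le hab (hu.stoppedProcess_of_discrete hτ a)
    (integrable_stoppedProcess hτ hint) fun m ham hmb => ?_
  filter_upwards [condExp_stoppedProcess_natCast_succ hu hint hτ m, hstep m ham hmb] with ω h₁ h₂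
  by_cases hm : m < τ ω
  · simp [h₁, Set.indicator_of_mem (show ω ∈ {ω | m < τ ω} from hm), h₂ hm]
  · simp [h₁, Set.indicator_of_notMem (show ω ∉ {ω | m < τ ω} from hm)]

lemma condExp_stoppedValue_eq_of_condExp_succ_eq {u : ℕ → Ω → ℝ} {τ : Ω → ℕ} {a b : ℕ}
    (hab : a ≤ b) (hu : StronglyAdapted 𝒢 u) (hint : ∀ m, Integrable (u m) μ)
    (hτ : IsStoppingTime 𝒢 (fun ω => (τ ω : WithTop ℕ))) (hτab : ∀ ω, a ≤ τ ω ∧ τ ω ≤ b)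
    (hstep : ∀ m, a ≤ m → m < b → ∀ᵐ ω ∂μ, m < τ ω → μ[u (m + 1)|𝒢 m] ω = u m ω) :
    μ[stoppedValue u (fun ω => (τ ω : WithTop ℕ))|𝒢 a] =ᵐ[μ] u a := by
  have hle := condExp_stoppedValue_le_of_condExp_succ_le hab hu hint hτ hτab
    fun m ham hmb => (hstep m ham hmb).mono fun ω h hm => (h hm).le
  have hge := condExp_stoppedValue_le_of_condExp_succ_le (u := -u) hab hu.neg
    (fun m => (hint m).neg) hτ hτab fun m ham hmb => by
      filter_upwards [condExp_neg (μ := μ) (u (m + 1)) (𝒢 m), hstep m ham hmb] with ω h₁ h₂ hm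
      simp [h₁, h₂ hm]
  filter_upwards [hle, hge,
    condExp_neg (μ := μ) (stoppedValue u (fun ω => (τ ω : WithTop ℕ))) (𝒢 a)] with ω h₁ h₂ h₃
  change μ[-stoppedValue u (fun ω => (τ ω : WithTop ℕ))|𝒢 a] ω ≤ -u a ω at h₂
  rw [h₃, Pi.neg_apply] at h₂
  linarith

lemma condExp_stoppedValue_le_condExp_succ {y R : ℕ → Ω → ℝ} {τ : Ω → ℕ} {n K : ℕ}
    (hn : n + 1 ≤ K) (hy : StronglyAdapted 𝒢 y) (hyint : ∀ m, Integrable (y m) μ)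
    (hRint : ∀ m, Integrable (R m) μ) (hτ : IsStoppingTime 𝒢 (fun ω => (τ ω : WithTop ℕ)))
    (hτb : ∀ ω, n + 1 ≤ τ ω ∧ τ ω ≤ K)
    (hsuper : ∀ m, n + 1 ≤ m → m < K → ∀ᵐ ω ∂μ, μ[y (m + 1)|𝒢 m] ω ≤ y m ω)
    (hRy : ∀ᵐ ω ∂μ, R (τ ω) ω ≤ y (τ ω) ω) :
    μ[stoppedValue R (fun ω => (τ ω : WithTop ℕ))|𝒢 n] ≤ᵐ[μ] μ[y (n + 1)|𝒢 n] := by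
  have hτK : ∀ ω, (τ ω : WithTop ℕ) ≤ K := fun ω => by exact_mod_cast (hτb ω).2
  calc μ[stoppedValue R (fun ω => (τ ω : WithTop ℕ))|𝒢 n]
      ≤ᵐ[μ] μ[stoppedValue y (fun ω => (τ ω : WithTop ℕ))|𝒢 n] :=
        condExp_mono (integrable_stoppedValue ℕ hτ hRint hτK)
          (integrable_stoppedValue ℕ hτ hyint hτK) hRy
    _ =ᵐ[μ] μ[μ[stoppedValue y (fun ω => (τ ω : WithTop ℕ))|𝒢 (n + 1)]|𝒢 n] :=
        (condExp_condExp_of_le (𝒢.mono n.le_succ) (𝒢.le (n + 1))).symm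
    _ ≤ᵐ[μ] μ[y (n + 1)|𝒢 n] :=
        condExp_mono integrable_condExp (hyint _)
          (condExp_stoppedValue_le_of_condExp_succ_le hn hy hyint hτ hτb
            fun m hm hmK => (hsuper m hm hmK).mono fun ω h _ => h)

lemma condExp_succ_eq_condExp_stoppedValue {y R : ℕ → Ω → ℝ} {τ : Ω → ℕ} {n K : ℕ}
    (hn : n + 1 ≤ K) (hy : StronglyAdapted 𝒢 y) (hyint : ∀ m, Integrable (y m) μ)
    (hτ : IsStoppingTime 𝒢 (fun ω => (τ ω : WithTop ℕ))) (hτb : ∀ ω, n + 1 ≤ τ ω ∧ τ ω ≤ K)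
    (hmart : ∀ m, n + 1 ≤ m → m < K → ∀ᵐ ω ∂μ, m < τ ω → μ[y (m + 1)|𝒢 m] ω = y m ω)
    (hRy : ∀ᵐ ω ∂μ, R (τ ω) ω = y (τ ω) ω) :
    μ[y (n + 1)|𝒢 n] =ᵐ[μ] μ[stoppedValue R (fun ω => (τ ω : WithTop ℕ))|𝒢 n] := by
  calc μ[y (n + 1)|𝒢 n]
      =ᵐ[μ] μ[μ[stoppedValue y (fun ω => (τ ω : WithTop ℕ))|𝒢 (n + 1)]|𝒢 n] :=
        condExp_congr_ae
          (condExp_stoppedValue_eq_of_condExp_succ_eq hn hy hyint hτ hτb hmart).symm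
    _ =ᵐ[μ] μ[stoppedValue y (fun ω => (τ ω : WithTop ℕ))|𝒢 n] :=
        condExp_condExp_of_le (𝒢.mono n.le_succ) (𝒢.le (n + 1))
    _ =ᵐ[μ] μ[stoppedValue R (fun ω => (τ ω : WithTop ℕ))|𝒢 n] :=
        condExp_congr_ae (hRy.mono fun ω h => h.symm)

def stoppingReward (S : ℕ → Ω → ℝ) (ξ : Ω → ℝ) (K : ℕ) : ℕ → Ω → ℝ :=
  fun m ω => if m < K then S m ω else ξ ω

section SnellEnvelope

variable {S y : ℕ → Ω → ℝ} {ξ : Ω → ℝ} {K n : ℕ}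

lemma condExp_stoppedValue_stoppingReward_le (hn : n + 1 ≤ K)
    (hSint : ∀ m, Integrable (S m) μ) (hξint : Integrable ξ μ)
    (hy : StronglyAdapted 𝒢 y) (hyint : ∀ m, Integrable (y m) μ) (hyK : y K = ξ)
    (hrec : ∀ᵐ ω ∂μ, ∀ m < K, y m ω = max (S m ω) (μ[y (m + 1)|𝒢 m] ω))
    {τ : Ω → ℕ} (hτ : IsStoppingTime 𝒢 (fun ω => (τ ω : WithTop ℕ)))
    (hτb : ∀ ω, n + 1 ≤ τ ω ∧ τ ω ≤ K) :
    μ[stoppedValue (stoppingReward S ξ K) (fun ω => (τ ω : WithTop ℕ))|𝒢 n]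
      ≤ᵐ[μ] μ[y (n + 1)|𝒢 n] := by
  have hRint : ∀ m, Integrable (stoppingReward S ξ K m) μ := fun m => by
    unfold stoppingReward
    by_cases hm : m < K <;> simp [hm, hSint m, hξint]
  refine condExp_stoppedValue_le_condExp_succ hn hy hyint hRint hτ hτb
    (fun m _ hmK => hrec.mono fun ω h => ?_) (hrec.mono fun ω h => ?_)
  · rw [h m hmK]
    exact le_max_right _ _
  · by_cases hK : τ ω < K
    · simp only [stoppingReward, if_pos hK, h _ hK, le_max_left]
    · simp [stoppingReward, hyK, show τ ω = K by have := hτb ω; omega]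

lemma condExp_succ_eq_condExp_stoppedValue_hittingBtwn (hn : n + 1 ≤ K)
    (hy : StronglyAdapted 𝒢 y) (hyint : ∀ m, Integrable (y m) μ) (hyK : y K = ξ)
    (hrec : ∀ᵐ ω ∂μ, ∀ m < K, y m ω = max (S m ω) (μ[y (m + 1)|𝒢 m] ω))
    (hτ : IsStoppingTime 𝒢
      (fun ω => ((hittingBtwn (y - S) (Set.Iic 0) (n + 1) K ω : ℕ) : WithTop ℕ))) :
    μ[y (n + 1)|𝒢 n] =ᵐ[μ] μ[stoppedValue (stoppingReward S ξ K)
      (fun ω => ((hittingBtwn (y - S) (Set.Iic 0) (n + 1) K ω : ℕ) : WithTop ℕ))|𝒢 n] := by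
  refine condExp_succ_eq_condExp_stoppedValue hn hy hyint hτ
    (fun ω => ⟨le_hittingBtwn hn ω, hittingBtwn_le ω⟩)
    (fun m hm hmK => hrec.mono fun ω h hlt => ?_) (hrec.mono fun ω h => ?_)
  · have hSy : S m ω < y m ω := by
      simpa [sub_nonpos] using notMem_of_lt_hittingBtwn hlt hm
    rw [h m hmK] at hSy ⊢
    exact (max_eq_right ((lt_max_iff.1 hSy).resolve_left (lt_irrefl _)).le).symm
  · by_cases hK : hittingBtwn (y - S) (Set.Iic 0) (n + 1) K ω < K
    · have hyS := hittingBtwn_mem_set_of_hittingBtwn_lt hK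
      simp only [Pi.sub_apply, Set.mem_Iic, sub_nonpos] at hyS
      simp only [stoppingReward, if_pos hK]
      exact le_antisymm (h _ hK ▸ le_max_left _ _) hyS
    · have hKle : hittingBtwn (y - S) (Set.Iic 0) (n + 1) K ω ≤ K := hittingBtwn_le ω
      simp [stoppingReward, hyK,
        show hittingBtwn (y - S) (Set.Iic 0) (n + 1) K ω = K by omega]

end SnellEnvelope

end MeasureTheory

theorem discrete_snell_no_immediate_stopping_general
    {Ω : Type*} {m0 : MeasurableSpace Ω} (μ : Measure Ω) [IsProbabilityMeasure μ]
    (𝒢 : Filtration ℕ m0) (K : ℕ)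
    (Sb : ℕ → Ω → ℝ) (hSadp : ∀ n, StronglyMeasurable[𝒢 n] (Sb n))
    (hSint : ∀ n, Integrable (Sb n) μ)
    (ξ : Ω → ℝ) (hξint : Integrable ξ μ)
    (y : ℕ → Ω → ℝ)
    (hyK : y K = ξ)
    (hyadp : ∀ n, StronglyMeasurable[𝒢 n] (y n)) (hyint : ∀ n, Integrable (y n) μ)
    (hyrec : ∀ n < K, y n =ᵐ[μ] fun ω => max (Sb n ω) ((μ[y (n + 1)|𝒢 n]) ω))
    (n : ℕ) (hn : n + 1 ≤ K)
    (Nstar : Ω → ℕ)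
    (hNstar : ∀ ω, Nstar ω = sInf ({m | n + 1 ≤ m ∧ y m ω ≤ Sb m ω} ∪ {K})) :
    (∀ N : Ω → ℕ, IsStoppingTime 𝒢 (fun ω => (N ω : WithTop ℕ)) → (∀ ω, n + 1 ≤ N ω ∧ N ω ≤ K) →
        (μ[fun ω => (if N ω < K then Sb (N ω) ω else ξ ω)|𝒢 n]) ≤ᵐ[μ] μ[y (n + 1)|𝒢 n])
    ∧ IsStoppingTime 𝒢 (fun ω => (Nstar ω : WithTop ℕ)) ∧ (∀ ω, n + 1 ≤ Nstar ω ∧ Nstar ω ≤ K)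
    ∧ (μ[y (n + 1)|𝒢 n])
        =ᵐ[μ] μ[fun ω => (if Nstar ω < K then Sb (Nstar ω) ω else ξ ω)|𝒢 n] := by
  have hrec : ∀ᵐ ω ∂μ, ∀ m < K, y m ω = max (Sb m ω) (μ[y (m + 1)|𝒢 m] ω) :=
    ae_all_iff.2 fun m => Filter.eventually_imp_distrib_left.2 (hyrec m)
  obtain rfl : Nstar = hittingBtwn (y - Sb) (Set.Iic 0) (n + 1) K := funext fun ω => by
    simp only [hNstar, hittingBtwn_eq_sInf_union _ _ hn, Pi.sub_apply, Set.mem_Iic, sub_nonpos]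
  have hτ : IsStoppingTime 𝒢
      fun ω => ((hittingBtwn (y - Sb) (Set.Iic 0) (n + 1) K ω : ℕ) : WithTop ℕ) :=
    Adapted.isStoppingTime_hittingBtwn (fun m => ((hyadp m).sub (hSadp m)).measurable)
      measurableSet_Iic
  exact ⟨fun N hN hNb => condExp_stoppedValue_stoppingReward_le hn hSint hξint hyadp hyint hyK
      hrec hN hNb, hτ, fun ω => ⟨le_hittingBtwn hn ω, hittingBtwn_le ω⟩,
    condExp_succ_eq_condExp_stoppedValue_hittingBtwn hn hyadp hyint hyK hrec hτ⟩

/-- Optimal stopping with stopping at the initial time forbidden: the value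
`y_n := E[ȳ_{n+1}|G_n]` is the essential supremum of `E[S̄_N 1_{N<K} + ξ̄ 1_{N=K}|G_n]`
over stopping times `n+1 ≤ N ≤ K`, and the first hitting time
`N*_{n+1} = min{m ≥ n+1 : ȳ_m ≤ S̄_m} ∧ K` is optimal. -/
theorem discrete_snell_no_immediate_stopping
    {Ω : Type*} {m0 : MeasurableSpace Ω} (μ : Measure Ω) [IsProbabilityMeasure μ]
    (𝒢 : Filtration ℕ m0) (K : ℕ)
    (Sb : ℕ → Ω → ℝ) (hSadp : ∀ n, StronglyMeasurable[𝒢 n] (Sb n))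
    (hSint : ∀ n, Integrable (Sb n) μ)
    (ξ : Ω → ℝ) (hξm : StronglyMeasurable[𝒢 K] ξ) (hξint : Integrable ξ μ)
    (y : ℕ → Ω → ℝ)
    (hyK : y K = ξ)
    (hyadp : ∀ n, StronglyMeasurable[𝒢 n] (y n)) (hyint : ∀ n, Integrable (y n) μ)
    (hyrec : ∀ n < K, y n =ᵐ[μ] fun ω => max (Sb n ω) ((μ[y (n + 1)|𝒢 n]) ω))
    (n : ℕ) (hn : n + 1 ≤ K)
    (Nstar : Ω → ℕ)
    (hNstar : ∀ ω, Nstar ω = sInf ({m | n + 1 ≤ m ∧ y m ω ≤ Sb m ω} ∪ {K})) :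
    (∀ N : Ω → ℕ, IsStoppingTime 𝒢 (fun ω => (N ω : WithTop ℕ)) → (∀ ω, n + 1 ≤ N ω ∧ N ω ≤ K) →
        (μ[fun ω => (if N ω < K then Sb (N ω) ω else ξ ω)|𝒢 n]) ≤ᵐ[μ] μ[y (n + 1)|𝒢 n])
    ∧ IsStoppingTime 𝒢 (fun ω => (Nstar ω : WithTop ℕ)) ∧ (∀ ω, n + 1 ≤ Nstar ω ∧ Nstar ω ≤ K)
    ∧ (μ[y (n + 1)|𝒢 n])
        =ᵐ[μ] μ[fun ω => (if Nstar ω < K then Sb (Nstar ω) ω else ξ ω)|𝒢 n] :=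
  discrete_snell_no_immediate_stopping_general μ 𝒢 K Sb hSadp hSint ξ hξint y hyK hyadp hyint hyrec
    n hn Nstar hNstar
end

section
/- Let (G_n)_{0 ≤ n ≤ K} be a discrete filtration, and for each regime i ∈ {1,…,d} let (Y^i_n) be adapted integrable processes satisfying the coupled recursion Y^i_n = E[ F^i_n + max{ M^i_{n+1}, Y^i_{n+1} } 1_{n+1 ≤ K-1} + ξ^i 1_{n+1 = K} | G_n ] where M^i_{n+1} = max_{j ≠ i} ( Y^j_{n+1} − C^{ij}_{n+1} ). Then Y^i_n equals the value of the discrete optimal switching problem starting from regime i at time n: Y^i_n = ess sup over admissible switching strategies u (adapted sequences of regimes starting at i, switching only at times n+1,…,K-1) of E[ ∑_m F^{u_m}_m + ξ^{u_K} − ∑ of switching costs C^{α_{k-1},α_k} at switching times | G_n ]. -/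
/-!
Backward induction on `n`. Conditioning the reward of a strategy `u` first on `𝒢 (n + 1)`, the
induction hypothesis bounds what follows time `n + 1` by `Y (u (n + 1)) (n + 1)`; after paying the
switching cost this is at most the right-hand side `F^i_n + max_j (Y^j_{n+1} - C^{ij}_{n+1})` of
the recursion, whose conditional expectation is `Y^i_n`. The bound is proved for strategies
starting from an arbitrary `𝒢 n`-measurable regime, so that it applies to the random regime
`u (n + 1)`: a finitely-valued measurable regime enters only through the indicators of `{u = j}`,
which pull out of conditional expectations. Equality is attained by switching at `n + 1` to a
measurable maximiser of `j ↦ Y^j_{n+1} - C^{ij}_{n+1}` and playing optimally from there on.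
-/

open MeasureTheory

section Selection

variable {Ω ι : Type*} {m m0 : MeasurableSpace Ω} {μ : Measure Ω}

theorem Measurable.select {β : Type*} [MeasurableSpace β] [Countable ι] [MeasurableSpace ι]
    [MeasurableSingletonClass ι] {g : ι → Ω → β} {D : Ω → ι}
    (hg : ∀ j, Measurable[m] (g j)) (hD : Measurable[m] D) :
    Measurable[m] fun ω => g (D ω) ω :=
  (measurable_from_prod_countable_left (f := fun p : Ω × ι => g p.2 p.1) hg).comp
    (measurable_id.prodMk hD)

variable [Fintype ι]

theorem select_eq_sum_indicator {E : Type*} [AddCommMonoid E] (g : ι → Ω → E) (D : Ω → ι) :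
    (fun ω => g (D ω) ω) = ∑ j, (D ⁻¹' {j}).indicator (g j) := by
  classical
  ext ω
  simp [Finset.sum_apply, Set.indicator_apply, eq_comm]

variable [MeasurableSpace ι] [MeasurableSingletonClass ι]

theorem MeasureTheory.Integrable.select {g : ι → Ω → ℝ} {D : Ω → ι} (hg : ∀ j, Integrable (g j) μ)
    (hD : Measurable D) : Integrable (fun ω => g (D ω) ω) μ := by
  rw [select_eq_sum_indicator]
  exact integrable_finsetSum' _ fun j _ => (hg j).indicator (hD (measurableSet_singleton j))

theorem condExp_select {g : ι → Ω → ℝ} {D : Ω → ι} (hm : m ≤ m0)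
    (hg : ∀ j, Integrable (g j) μ) (hD : Measurable[m] D) :
    μ[fun ω => g (D ω) ω|m] =ᵐ[μ] fun ω => μ[g (D ω)|m] ω := by
  have hDj : ∀ j, MeasurableSet[m] (D ⁻¹' {j}) := fun j => hD (measurableSet_singleton j)
  rw [select_eq_sum_indicator, select_eq_sum_indicator fun j => μ[g j|m]]
  refine (condExp_finsetSum (fun j _ => (hg j).indicator (hm _ (hDj j))) m).trans ?_
  filter_upwards [ae_all_iff.2 fun j => condExp_indicator (m := m) (hg j) (hDj j)] with ω hω
  simp only [Finset.sum_apply, hω]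

theorem select_ae_eq_condExp_select {Y Φ : ι → Ω → ℝ} {D : Ω → ι} (hm : m ≤ m0)
    (hΦ : ∀ j, Integrable (Φ j) μ) (hD : Measurable[m] D) (hY : ∀ j, Y j =ᵐ[μ] μ[Φ j|m]) :
    (fun ω => Y (D ω) ω) =ᵐ[μ] μ[fun ω => Φ (D ω) ω|m] := by
  filter_upwards [ae_all_iff.2 hY, condExp_select hm hΦ hD] with ω hY hΦ
  rw [hΦ, hY]

theorem exists_measurable_argmax [Nonempty ι] {g : ι → Ω → ℝ} (hg : ∀ j, Measurable[m] (g j)) :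
    ∃ D : Ω → ι, Measurable[m] D ∧ ∀ ω j, g j ω ≤ g (D ω) ω := by
  suffices ∀ s : Finset ι, s.Nonempty →
      ∃ D : Ω → ι, Measurable[m] D ∧ ∀ ω, ∀ j ∈ s, g j ω ≤ g (D ω) ω by
    obtain ⟨D, hD, hmax⟩ := this Finset.univ Finset.univ_nonempty
    exact ⟨D, hD, fun ω j => hmax ω j (Finset.mem_univ j)⟩
  intro s hs
  induction hs using Finset.Nonempty.cons_induction with
  | singleton a => exact ⟨fun _ => a, measurable_const, by simp⟩
  | cons a t ha ht ih =>
    obtain ⟨D, hD, hmax⟩ := ih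
    refine ⟨fun ω => if g (D ω) ω < g a ω then a else D ω,
      Measurable.ite (measurableSet_lt (Measurable.select hg hD) (hg a)) measurable_const hD,
      fun ω j hj => ?_⟩
    dsimp only
    rcases Finset.mem_cons.1 hj with rfl | hj
    · split_ifs with h
      · exact le_rfl
      · exact not_lt.1 h
    · split_ifs with h
      · exact (hmax ω j hj).trans h.le
      · exact hmax ω j hj

end Selection

theorem MeasureTheory.Integrable.iSup_of_finite {Ω ι : Type*} [Finite ι] {m0 : MeasurableSpace Ω}
    {μ : Measure Ω} {g : ι → Ω → ℝ} (hg : ∀ j, Integrable (g j) μ) :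
    Integrable (fun ω => ⨆ j, g j ω) μ := by
  cases isEmpty_or_nonempty ι
  · simp only [Real.iSup_of_isEmpty]
    exact integrable_zero Ω ℝ μ
  · have := Fintype.ofFinite ι
    have hsup : (fun ω => ⨆ j, g j ω) = Finset.univ.sup' Finset.univ_nonempty g := by
      ext ω
      rw [Finset.sup'_apply, Finset.sup'_univ_eq_ciSup]
    rw [hsup]
    exact Finset.sup'_induction (p := fun f => Integrable f μ) _ _ (fun _ h₁ _ h₂ => h₁.sup h₂)
      fun j _ => hg j

theorem max_sup'_erase_eq_ciSup {ι α : Type*} [Fintype ι] [DecidableEq ι]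
    [ConditionallyCompleteLinearOrder α] (f : ι → α) {i : ι}
    (h : (Finset.univ.erase i).Nonempty) :
    max ((Finset.univ.erase i).sup' h f) (f i) = ⨆ j, f j := by
  have : Nonempty ι := ⟨i⟩
  refine le_antisymm (max_le (Finset.sup'_le _ _ fun j _ => le_ciSup (Finite.bddAbove_range f) j)
    (le_ciSup (Finite.bddAbove_range f) i)) (ciSup_le fun j => ?_)
  by_cases hj : j = i
  · subst hj
    exact le_max_right _ _
  · exact (Finset.le_sup' f (Finset.mem_erase.2 ⟨hj, Finset.mem_univ j⟩)).trans (le_max_left _ _)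

theorem condExp_add_condExp_of_le {Ω : Type*} {m m' m0 : MeasurableSpace Ω} {μ : Measure Ω}
    (hmm' : m ≤ m') (hm' : m' ≤ m0) [SigmaFinite (μ.trim hm')] {f g : Ω → ℝ}
    (hf : Integrable f μ) (hg : Integrable g μ) :
    μ[f + μ[g|m']|m] =ᵐ[μ] μ[f + g|m] := by
  filter_upwards [condExp_add hf (integrable_condExp (m := m') (f := g)) m, condExp_add hf hg m,
    condExp_condExp_of_le (f := g) (μ := μ) hmm' hm'] with ω h₁ h₂ h₃
  simp only [h₁, h₂, Pi.add_apply, h₃]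

section SwitchingReward

variable {Ω ι : Type*} [DecidableEq ι] {K : ℕ} {F : ι → ℕ → Ω → ℝ} {ξ : ι → Ω → ℝ}
  {Cost : ι → ι → ℕ → Ω → ℝ}

variable (K F ξ Cost) in
def switchingReward (u : ℕ → Ω → ι) (n : ℕ) (ω : Ω) : ℝ :=
  (∑ m ∈ Finset.Ico n K, F (u m ω) m ω) + ξ (u K ω) ω
    - ∑ m ∈ Finset.Ioc n K,
        (if u m ω = u (m - 1) ω then 0 else Cost (u (m - 1) ω) (u m ω) m ω)

theorem switchingReward_congr {u v : ℕ → Ω → ι} {n : ℕ} {ω : Ω} (hnK : n ≤ K)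
    (huv : ∀ m, n ≤ m → u m ω = v m ω) :
    switchingReward K F ξ Cost u n ω = switchingReward K F ξ Cost v n ω := by
  unfold switchingReward
  rw [huv K hnK]
  congr 1
  · congr 1
    refine Finset.sum_congr rfl fun m hm => ?_
    rw [huv m (Finset.mem_Ico.1 hm).1]
  · refine Finset.sum_congr rfl fun m hm => ?_
    have hnm := (Finset.mem_Ioc.1 hm).1
    rw [huv m hnm.le, huv (m - 1) (by omega)]

theorem switchingReward_eq_of_lt (hC : ∀ i n ω, Cost i i n ω = 0) (u : ℕ → Ω → ι) {n : ℕ}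
    (hn : n < K) (ω : Ω) :
    switchingReward K F ξ Cost u n ω = F (u n ω) n ω - Cost (u n ω) (u (n + 1) ω) (n + 1) ω
      + switchingReward K F ξ Cost u (n + 1) ω := by
  have hswitch : (if u (n + 1) ω = u n ω then 0 else Cost (u n ω) (u (n + 1) ω) (n + 1) ω)
      = Cost (u n ω) (u (n + 1) ω) (n + 1) ω := by
    split_ifs with h
    · rw [h, hC]
    · rfl
  unfold switchingReward
  rw [Finset.sum_eq_sum_Ico_succ_bot hn, ← Finset.Icc_add_one_left_eq_Ioc,
    ← Finset.Ioc_insert_left hn, Finset.sum_insert Finset.left_notMem_Ioc, Nat.add_sub_cancel,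
    hswitch]
  ring

theorem switchingReward_pred_of_stationary (hK : 0 < K) {u : ℕ → Ω → ι} {ω : Ω}
    (hu : u K ω = u (K - 1) ω) :
    switchingReward K F ξ Cost u (K - 1) ω = F (u (K - 1) ω) (K - 1) ω + ξ (u (K - 1) ω) ω := by
  have hIco : Finset.Ico (K - 1) K = {K - 1} := by
    ext m; simp only [Finset.mem_Ico, Finset.mem_singleton]; omega
  have hIoc : Finset.Ioc (K - 1) K = {K} := by
    ext m; simp only [Finset.mem_Ioc, Finset.mem_singleton]; omega
  simp [switchingReward, hIco, hIoc, hu]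

theorem integrable_switchingReward [Fintype ι] [MeasurableSpace ι] [MeasurableSingletonClass ι]
    {m0 : MeasurableSpace Ω} {μ : Measure Ω} (hF : ∀ i n, Integrable (F i n) μ)
    (hξ : ∀ i, Integrable (ξ i) μ) (hC : ∀ i j n, Integrable (Cost i j n) μ)
    {u : ℕ → Ω → ι} (hu : ∀ m, Measurable (u m)) (n : ℕ) :
    Integrable (switchingReward K F ξ Cost u n) μ := by
  refine ((integrable_finsetSum _ fun m _ => (Integrable.select (hF · m) (hu m))).add
    (Integrable.select hξ (hu K))).sub (integrable_finsetSum _ fun m _ => ?_)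
  have hswitch : ∀ p : ι × ι,
      Integrable (fun ω => if p.2 = p.1 then 0 else Cost p.1 p.2 m ω) μ := by
    intro p
    split_ifs
    · exact integrable_zero Ω ℝ μ
    · exact hC p.1 p.2 m
  exact Integrable.select (D := fun ω => (u (m - 1) ω, u m ω)) hswitch ((hu (m - 1)).prodMk (hu m))

end SwitchingReward

section StayThenFollow

variable {Ω ι : Type*}

def stayThenFollow (i : ι) (k : ℕ) (D : Ω → ι) (w : ι → ℕ → Ω → ι) (m : ℕ) (ω : Ω) : ι :=
  if m ≤ k then i else w (D ω) m ω

theorem stayThenFollow_of_le {i : ι} {k m : ℕ} {D : Ω → ι} {w : ι → ℕ → Ω → ι} (hm : m ≤ k)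
    (ω : Ω) : stayThenFollow i k D w m ω = i :=
  if_pos hm

theorem stayThenFollow_of_lt {i : ι} {k m : ℕ} {D : Ω → ι} {w : ι → ℕ → Ω → ι} (hm : k < m)
    (ω : Ω) : stayThenFollow i k D w m ω = w (D ω) m ω :=
  if_neg (not_le.2 hm)

theorem measurable_stayThenFollow [Countable ι] [MeasurableSpace ι] [MeasurableSingletonClass ι]
    {m0 : MeasurableSpace Ω} {𝒢 : Filtration ℕ m0} {i : ι} {k : ℕ} {D : Ω → ι} {w : ι → ℕ → Ω → ι}
    (hw : ∀ j m, Measurable[𝒢 m] (w j m)) (hD : Measurable[𝒢 (k + 1)] D) (m : ℕ) :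
    Measurable[𝒢 m] (stayThenFollow i k D w m) := by
  by_cases hm : m ≤ k
  · rw [funext (stayThenFollow_of_le (D := D) (w := w) (i := i) hm)]
    exact measurable_const
  · rw [funext (stayThenFollow_of_lt (D := D) (w := w) (i := i) (not_le.1 hm))]
    exact Measurable.select (hw · m) (hD.mono (𝒢.mono (by omega)) le_rfl)

end StayThenFollow

/-- The supremum over all `j` stands for the paper's `max (M^i_{n+1}) (Y^i_{n+1})`, `M^i` being the
supremum over `j ≠ i`: the term `j = i` is `Y^i_{n+1}` once `C^{ii} = 0`. -/
structure SolvesSwitchingBellman {Ω ι : Type*} {m0 : MeasurableSpace Ω} (μ : Measure Ω)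
    (𝒢 : Filtration ℕ m0) (K : ℕ) (F : ι → ℕ → Ω → ℝ) (ξ : ι → Ω → ℝ)
    (Cost : ι → ι → ℕ → Ω → ℝ) (Y : ι → ℕ → Ω → ℝ) : Prop where
  terminal : ∀ i, Y i (K - 1) =ᵐ[μ] μ[fun ω => F i (K - 1) ω + ξ i ω|𝒢 (K - 1)]
  step : ∀ i n, n + 1 < K →
    Y i n =ᵐ[μ] μ[fun ω => F i n ω + ⨆ j, (Y j (n + 1) ω - Cost i j (n + 1) ω)|𝒢 n]

section OptimalSwitching

variable {Ω ι : Type*} [Fintype ι] [DecidableEq ι] [MeasurableSpace ι] [MeasurableSingletonClass ι]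
  {m0 : MeasurableSpace Ω} {μ : Measure Ω} {𝒢 : Filtration ℕ m0} [SigmaFiniteFiltration μ 𝒢]
  {K : ℕ} {F : ι → ℕ → Ω → ℝ} {ξ : ι → Ω → ℝ} {Cost : ι → ι → ℕ → Ω → ℝ} {Y : ι → ℕ → Ω → ℝ}

theorem condExp_switchingReward_le
    (hF : ∀ i n, Integrable (F i n) μ) (hξ : ∀ i, Integrable (ξ i) μ)
    (hC : ∀ i j n, Integrable (Cost i j n) μ) (hCdiag : ∀ i n ω, Cost i i n ω = 0)
    (hYint : ∀ i n, Integrable (Y i n) μ) (hYbell : SolvesSwitchingBellman μ 𝒢 K F ξ Cost Y)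
    {n : ℕ} (hn : n < K) {u : ℕ → Ω → ι} (hu : ∀ m, Measurable[𝒢 m] (u m))
    (hstat : ∀ ω, u K ω = u (K - 1) ω) :
    μ[switchingReward K F ξ Cost u n|𝒢 n] ≤ᵐ[μ] fun ω => Y (u n ω) n ω := by
  have hu' : ∀ m, Measurable (u m) := fun m => (hu m).mono (𝒢.le m) le_rfl
  induction Nat.le_sub_one_of_lt hn using Nat.decreasingInduction with
  | self =>
    have hR : switchingReward K F ξ Cost u (K - 1)
        = fun ω => F (u (K - 1) ω) (K - 1) ω + ξ (u (K - 1) ω) ω :=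
      funext fun ω => switchingReward_pred_of_stationary (by omega) (hstat ω)
    rw [hR]
    exact (select_ae_eq_condExp_select (𝒢.le _) (fun i => (hF i _).add (hξ i)) (hu _)
      hYbell.terminal).symm.le
  | of_succ k hk ih =>
    set f : Ω → ℝ := fun ω => F (u k ω) k ω - Cost (u k ω) (u (k + 1) ω) (k + 1) ω
    have hf : Integrable f μ := (Integrable.select (hF · k) (hu' k)).sub
      (Integrable.select (D := fun ω => (u k ω, u (k + 1) ω)) (fun p => hC p.1 p.2 (k + 1))
        ((hu' k).prodMk (hu' (k + 1))))
    set Φ : ι → Ω → ℝ := fun i ω => F i k ω + ⨆ j, (Y j (k + 1) ω - Cost i j (k + 1) ω)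
    have hΦ : ∀ i, Integrable (Φ i) μ := fun i =>
      (hF i k).add (Integrable.iSup_of_finite fun j => (hYint j _).sub (hC i j _))
    have hR : switchingReward K F ξ Cost u k = f + switchingReward K F ξ Cost u (k + 1) :=
      funext (switchingReward_eq_of_lt hCdiag u (by omega))
    calc μ[switchingReward K F ξ Cost u k|𝒢 k]
        = μ[f + switchingReward K F ξ Cost u (k + 1)|𝒢 k] := by rw [hR]
      _ =ᵐ[μ] μ[f + μ[switchingReward K F ξ Cost u (k + 1)|𝒢 (k + 1)]|𝒢 k] :=
        (condExp_add_condExp_of_le (𝒢.mono k.le_succ) (𝒢.le _) hf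
          (integrable_switchingReward hF hξ hC hu' _)).symm
      _ ≤ᵐ[μ] μ[fun ω => Φ (u k ω) ω|𝒢 k] := by
        refine condExp_mono (hf.add integrable_condExp) (Integrable.select hΦ (hu' k)) ?_
        filter_upwards [ih (by omega)] with ω hω
        have := le_ciSup (Finite.bddAbove_range fun j => Y j (k + 1) ω - Cost (u k ω) j (k + 1) ω)
          (u (k + 1) ω)
        simp only [Pi.add_apply, f, Φ]
        linarith
      _ =ᵐ[μ] fun ω => Y (u k ω) k ω :=
        (select_ae_eq_condExp_select (𝒢.le k) hΦ (hu k) fun i => hYbell.step i k (by omega)).symm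

theorem condExp_switchingReward_stayThenFollow
    (hF : ∀ i n, Integrable (F i n) μ) (hξ : ∀ i, Integrable (ξ i) μ)
    (hC : ∀ i j n, Integrable (Cost i j n) μ) (hCdiag : ∀ i n ω, Cost i i n ω = 0)
    {k : ℕ} (hk : k < K) (i : ι) {D : Ω → ι} (hD : Measurable[𝒢 (k + 1)] D)
    {w : ι → ℕ → Ω → ι} (hw : ∀ j m, Measurable[𝒢 m] (w j m))
    (hw_init : ∀ j ω, w j (k + 1) ω = j)
    (hw_eq : ∀ j, Y j (k + 1) =ᵐ[μ] μ[switchingReward K F ξ Cost (w j) (k + 1)|𝒢 (k + 1)]) :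
    μ[switchingReward K F ξ Cost (stayThenFollow i k D w) k|𝒢 k] =ᵐ[μ]
      μ[fun ω => F i k ω - Cost i (D ω) (k + 1) ω + Y (D ω) (k + 1) ω|𝒢 k] := by
  set f : Ω → ℝ := fun ω => F i k ω - Cost i (D ω) (k + 1) ω
  have hf : Integrable f μ := (hF i k).sub
    (Integrable.select (hC i · (k + 1)) (hD.mono (𝒢.le _) le_rfl))
  have hwR : ∀ j, Integrable (switchingReward K F ξ Cost (w j) (k + 1)) μ := fun j =>
    integrable_switchingReward hF hξ hC (fun m => (hw j m).mono (𝒢.le m) le_rfl) _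
  have hR : switchingReward K F ξ Cost (stayThenFollow i k D w) k
      = f + fun ω => switchingReward K F ξ Cost (w (D ω)) (k + 1) ω := by
    ext ω
    rw [switchingReward_eq_of_lt hCdiag _ hk, stayThenFollow_of_le le_rfl,
      stayThenFollow_of_lt k.lt_succ_self, hw_init,
      switchingReward_congr hk fun m hm => stayThenFollow_of_lt hm ω]
    rfl
  calc μ[switchingReward K F ξ Cost (stayThenFollow i k D w) k|𝒢 k]
      = μ[f + fun ω => switchingReward K F ξ Cost (w (D ω)) (k + 1) ω|𝒢 k] := by rw [hR]
    _ =ᵐ[μ] μ[f + μ[fun ω => switchingReward K F ξ Cost (w (D ω)) (k + 1) ω|𝒢 (k + 1)]|𝒢 k] :=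
      (condExp_add_condExp_of_le (𝒢.mono k.le_succ) (𝒢.le _) hf
        (Integrable.select hwR (hD.mono (𝒢.le _) le_rfl))).symm
    _ =ᵐ[μ] μ[f + fun ω => Y (D ω) (k + 1) ω|𝒢 k] :=
      condExp_congr_ae (Filter.EventuallyEq.rfl.add
        (select_ae_eq_condExp_select (𝒢.le _) hwR hD hw_eq).symm)

theorem exists_optimal_switching
    (hF : ∀ i n, Integrable (F i n) μ) (hξ : ∀ i, Integrable (ξ i) μ)
    (hC : ∀ i j n, Integrable (Cost i j n) μ) (hCdiag : ∀ i n ω, Cost i i n ω = 0)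
    (hCm : ∀ i j n, Measurable[𝒢 n] (Cost i j n)) (hYm : ∀ i n, Measurable[𝒢 n] (Y i n))
    (hYbell : SolvesSwitchingBellman μ 𝒢 K F ξ Cost Y)
    {n : ℕ} (hn : n < K) (i : ι) :
    ∃ u : ℕ → Ω → ι, (∀ m, Measurable[𝒢 m] (u m)) ∧ (∀ ω, ∀ m ≤ n, u m ω = i) ∧
      (∀ ω, ∀ m, K - 1 ≤ m → u m ω = u (K - 1) ω) ∧
      Y i n =ᵐ[μ] μ[switchingReward K F ξ Cost u n|𝒢 n] := by
  induction Nat.le_sub_one_of_lt hn using Nat.decreasingInduction generalizing i with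
  | self =>
    refine ⟨fun _ _ => i, fun _ => measurable_const, fun _ _ _ => rfl, fun _ _ _ => rfl, ?_⟩
    have hR : switchingReward K F ξ Cost (fun _ _ => i) (K - 1) = fun ω => F i (K - 1) ω + ξ i ω :=
      funext fun ω => switchingReward_pred_of_stationary (by omega) rfl
    rw [hR]
    exact hYbell.terminal i
  | of_succ k hk ih =>
    choose w hw_meas hw_init hw_stat hw_eq using ih (by omega)
    have : Nonempty ι := ⟨i⟩
    obtain ⟨D, hD, hD_max⟩ :=
      exists_measurable_argmax fun j => (hYm j (k + 1)).sub (hCm i j (k + 1))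
    refine ⟨stayThenFollow i k D w, measurable_stayThenFollow hw_meas hD,
      fun ω m hm => stayThenFollow_of_le hm ω, fun ω m hm => ?_, ?_⟩
    · rw [stayThenFollow_of_lt (by omega), stayThenFollow_of_lt (by omega), hw_stat _ ω m hm]
    have hsup : ∀ ω, ⨆ j, (Y j (k + 1) ω - Cost i j (k + 1) ω)
        = Y (D ω) (k + 1) ω - Cost i (D ω) (k + 1) ω := fun ω =>
      le_antisymm (ciSup_le (hD_max ω))
        (le_ciSup (Finite.bddAbove_range fun j => Y j (k + 1) ω - Cost i j (k + 1) ω) (D ω))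
    calc Y i k
        =ᵐ[μ] μ[fun ω => F i k ω + ⨆ j, (Y j (k + 1) ω - Cost i j (k + 1) ω)|𝒢 k] :=
          hYbell.step i k (by omega)
      _ = μ[fun ω => F i k ω - Cost i (D ω) (k + 1) ω + Y (D ω) (k + 1) ω|𝒢 k] := by
        simp only [hsup, add_sub, sub_add_eq_add_sub]
      _ =ᵐ[μ] μ[switchingReward K F ξ Cost (stayThenFollow i k D w) k|𝒢 k] :=
        (condExp_switchingReward_stayThenFollow hF hξ hC hCdiag (by omega) i hD hw_meas
          (fun j ω => hw_init j ω _ le_rfl) hw_eq).symm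

end OptimalSwitching

theorem discrete_optimal_switching_representation_general
    {Ω : Type*} {m0 : MeasurableSpace Ω} (μ : Measure Ω) [IsProbabilityMeasure μ]
    (𝒢 : Filtration ℕ m0) (K d : ℕ)
    (hne : ∀ i : Fin d, (Finset.univ.erase i).Nonempty)
    (F : Fin d → ℕ → Ω → ℝ)
    (hFint : ∀ i n, Integrable (F i n) μ)
    (ξ : Fin d → Ω → ℝ)
    (hξint : ∀ i, Integrable (ξ i) μ)
    (Cost : Fin d → Fin d → ℕ → Ω → ℝ)
    (hCm : ∀ i j n, StronglyMeasurable[𝒢 n] (Cost i j n))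
    (hCb : ∃ Cb : ℝ, ∀ i j n ω, |Cost i j n ω| ≤ Cb)
    (hCdiag : ∀ i n ω, Cost i i n ω = 0)
    (Y : Fin d → ℕ → Ω → ℝ)
    (hYm : ∀ i n, StronglyMeasurable[𝒢 n] (Y i n))
    (hYint : ∀ i n, Integrable (Y i n) μ)
    (hYrec : ∀ i : Fin d, ∀ n < K, Y i n =ᵐ[μ]
      μ[fun ω => F i n ω
          + (if n + 1 < K then
              max ((Finset.univ.erase i).sup' (hne i)
                    (fun j => Y j (n + 1) ω - Cost i j (n + 1) ω))
                  (Y i (n + 1) ω)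
            else 0)
          + (if n + 1 = K then ξ i ω else 0)|𝒢 n]) :
    ∀ (i : Fin d) (n : ℕ), n < K →
      (∀ u : ℕ → Ω → Fin d,
          (∀ m, Measurable[𝒢 m] (u m)) →
          (∀ ω, ∀ m ≤ n, u m ω = i) →
          (∀ ω, ∀ m, K - 1 ≤ m → u m ω = u (K - 1) ω) →
          (μ[fun ω => (∑ m ∈ Finset.Ico n K, F (u m ω) m ω) + ξ (u K ω) ω
              - ∑ m ∈ Finset.Ioc n K,
                  (if u m ω = u (m - 1) ω then 0 else Cost (u (m - 1) ω) (u m ω) m ω)|𝒢 n])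
            ≤ᵐ[μ] Y i n)
      ∧ ∃ u : ℕ → Ω → Fin d,
          (∀ m, Measurable[𝒢 m] (u m)) ∧
          (∀ ω, ∀ m ≤ n, u m ω = i) ∧
          (∀ ω, ∀ m, K - 1 ≤ m → u m ω = u (K - 1) ω) ∧
          Y i n =ᵐ[μ]
            μ[fun ω => (∑ m ∈ Finset.Ico n K, F (u m ω) m ω) + ξ (u K ω) ω
              - ∑ m ∈ Finset.Ioc n K,
                  (if u m ω = u (m - 1) ω then 0 else Cost (u (m - 1) ω) (u m ω) m ω)|𝒢 n] := by
  intro i n hn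
  obtain ⟨Cb, hCb⟩ := hCb
  have hCint : ∀ i j n, Integrable (Cost i j n) μ := fun i j n =>
    .of_bound ((hCm i j n).mono (𝒢.le n)).aestronglyMeasurable Cb (ae_of_all _ (hCb i j n))
  have hYbell : SolvesSwitchingBellman μ 𝒢 K F ξ Cost Y := by
    refine ⟨fun j => (hYrec j (K - 1) (by omega)).trans ?_,
      fun j k hk => (hYrec j k (by omega)).trans ?_⟩
    all_goals refine condExp_congr_ae (ae_of_all _ fun ω => ?_)
    · simp [Nat.sub_add_cancel (by omega : 1 ≤ K)]
    · have hmax := max_sup'_erase_eq_ciSup (fun l => Y l (k + 1) ω - Cost j l (k + 1) ω) (hne j)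
      rw [hCdiag, sub_zero] at hmax
      simp [hk, hk.ne, hmax]
  refine ⟨fun u hu hu_init hu_stat => ?_, exists_optimal_switching hFint hξint hCint hCdiag
    (fun j l k => (hCm j l k).measurable) (fun j k => (hYm j k).measurable) hYbell hn i⟩
  filter_upwards [condExp_switchingReward_le hFint hξint hCint hCdiag hYint hYbell hn hu
    fun ω => hu_stat ω K (Nat.sub_le K 1)] with ω hω
  rwa [hu_init ω n le_rfl] at hω

/-- Discrete optimal switching representation: if `(Y^i_n)` solves the coupled backward
recursion `Y^i_n = E[F^i_n + max{M^i_{n+1}, Y^i_{n+1}} 1_{n+1<K} + ξ^i 1_{n+1=K} | G_n]`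
with `M^i_m = max_{j ≠ i}(Y^j_m − C^{ij}_m)`, then `Y^i_n` is the essential supremum,
over admissible switching strategies starting from regime `i` at time `n` (switching
only at times `n+1,…,K-1`), of the conditional expected total reward
`∑_m F^{u_m}_m + ξ^{u_K} − ∑ switching costs`; the supremum is attained. -/
theorem discrete_optimal_switching_representation
    {Ω : Type*} {m0 : MeasurableSpace Ω} (μ : Measure Ω) [IsProbabilityMeasure μ]
    (𝒢 : Filtration ℕ m0) (K d : ℕ) (hd : 2 ≤ d) (hK : 1 ≤ K)
    (hne : ∀ i : Fin d, (Finset.univ.erase i).Nonempty)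
    (F : Fin d → ℕ → Ω → ℝ)
    (hFm : ∀ i n, StronglyMeasurable[𝒢 (n + 1)] (F i n))
    (hFint : ∀ i n, Integrable (F i n) μ)
    (ξ : Fin d → Ω → ℝ)
    (hξm : ∀ i, StronglyMeasurable[𝒢 K] (ξ i)) (hξint : ∀ i, Integrable (ξ i) μ)
    (c : ℝ) (hc : 0 < c)
    (Cost : Fin d → Fin d → ℕ → Ω → ℝ)
    (hCm : ∀ i j n, StronglyMeasurable[𝒢 n] (Cost i j n))
    (hCb : ∃ Cb : ℝ, ∀ i j n ω, |Cost i j n ω| ≤ Cb)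
    (hCdiag : ∀ i n ω, Cost i i n ω = 0)
    (hCpos : ∀ i j n ω, i ≠ j → c ≤ Cost i j n ω)
    (hCtri : ∀ i j l n ω, i ≠ j → j ≠ l → i ≠ l →
      c ≤ Cost i j n ω + Cost j l n ω - Cost i l n ω)
    (Y : Fin d → ℕ → Ω → ℝ)
    (hYm : ∀ i n, StronglyMeasurable[𝒢 n] (Y i n))
    (hYint : ∀ i n, Integrable (Y i n) μ)
    (hYrec : ∀ i : Fin d, ∀ n < K, Y i n =ᵐ[μ]
      μ[fun ω => F i n ω
          + (if n + 1 < K then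
              max ((Finset.univ.erase i).sup' (hne i)
                    (fun j => Y j (n + 1) ω - Cost i j (n + 1) ω))
                  (Y i (n + 1) ω)
            else 0)
          + (if n + 1 = K then ξ i ω else 0)|𝒢 n]) :
    ∀ (i : Fin d) (n : ℕ), n < K →
      (∀ u : ℕ → Ω → Fin d,
          (∀ m, Measurable[𝒢 m] (u m)) →
          (∀ ω, ∀ m ≤ n, u m ω = i) →
          (∀ ω, ∀ m, K - 1 ≤ m → u m ω = u (K - 1) ω) →
          (μ[fun ω => (∑ m ∈ Finset.Ico n K, F (u m ω) m ω) + ξ (u K ω) ω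
              - ∑ m ∈ Finset.Ioc n K,
                  (if u m ω = u (m - 1) ω then 0 else Cost (u (m - 1) ω) (u m ω) m ω)|𝒢 n])
            ≤ᵐ[μ] Y i n)
      ∧ ∃ u : ℕ → Ω → Fin d,
          (∀ m, Measurable[𝒢 m] (u m)) ∧
          (∀ ω, ∀ m ≤ n, u m ω = i) ∧
          (∀ ω, ∀ m, K - 1 ≤ m → u m ω = u (K - 1) ω) ∧
          Y i n =ᵐ[μ]
            μ[fun ω => (∑ m ∈ Finset.Ico n K, F (u m ω) m ω) + ξ (u K ω) ω
              - ∑ m ∈ Finset.Ioc n K,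
                  (if u m ω = u (m - 1) ω then 0 else Cost (u (m - 1) ω) (u m ω) m ω)|𝒢 n] :=
  discrete_optimal_switching_representation_general μ 𝒢 K d hne F hFint ξ hξint Cost hCm hCb hCdiag
    Y hYm hYint hYrec
end
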